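/- arXiv:math/0510267 — 9 statements merged into one kernel-verified Lean document; each statement's English description precedes it below -/
import Mathlib

section
/- Let A and B be complex *-algebras, let σ, τ : A → B be *-linear maps, and let d : A → B be a *-(σ,τ)-derivation. Then d is a *-((σ+τ)/2)-derivation, i.e. d(ab) = d(a)·((σ(b)+τ(b))/2) + ((σ(a)+τ(a))/2)·d(b) for all a, b ∈ A. -/
/-- Every `*`-`(σ,τ)`-derivation between complex `*`-algebras is a
`*`-`((σ+τ)/2)`-derivation. -/
theorem star_sigma_tau_derivation_is_mean_derivation
    {A B : Type*} [Ring A] [Algebra ℂ A] [StarRing A] [StarModule ℂ A]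
    [Ring B] [Algebra ℂ B] [StarRing B] [StarModule ℂ B]
    (σ τ : A →ₗ[ℂ] B)
    (hσ : ∀ a : A, σ (star a) = star (σ a))
    (hτ : ∀ a : A, τ (star a) = star (τ a))
    (d : A →ₗ[ℂ] B)
    (hd_star : ∀ a : A, d (star a) = star (d a))
    (hd : ∀ a b : A, d (a * b) = d a * σ b + τ a * d b) :
    ∀ a b : A, d (a * b) = d a * ((1 / 2 : ℂ) • (σ b + τ b))
      + ((1 / 2 : ℂ) • (σ a + τ a)) * d b := by
  intro a b
  have hswap : d (a * b) = d a * τ b + σ a * d b := by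
    have h1 : a * b = star (star b * star a) := by simp
    calc d (a * b) = d (star (star b * star a)) := by rw [← h1]
      _ = star (d (star b * star a)) := hd_star _
      _ = star (d (star b) * σ (star a) + τ (star b) * d (star a)) := by rw [hd]
      _ = d a * τ b + σ a * d b := by
          simp [star_add, star_mul, hd_star, hσ, hτ]
          exact add_comm _ _
  have h2 : (2 : ℂ) • d (a * b) = (2:ℂ) • (d a * ((1 / 2 : ℂ) • (σ b + τ b))
      + ((1 / 2 : ℂ) • (σ a + τ a)) * d b) := by
    rw [smul_add, mul_smul_comm, smul_mul_assoc, smul_smul, smul_smul]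
    norm_num
    calc (2:ℂ) • d (a * b) = d (a*b) + d (a*b) := two_smul ℂ _
      _ = (d a * σ b + τ a * d b) + (d a * τ b + σ a * d b) := by
          nth_rewrite 1 [hd a b]; rw [hswap]
      _ = d a * (σ b + τ b) + (σ a + τ a) * d b := by noncomm_ring
  have := smul_right_injective B (by norm_num : (2:ℂ) ≠ 0) h2
  exact this
end

section
/- Let A and B be associative algebras, let σ : A → B be a linear map, and let d : A → B be a σ-derivation. Then for all a, b, c ∈ A one has the intertwining identity (σ(ab) − σ(a)σ(b))·d(c) = d(a)·(σ(bc) − σ(b)σ(c)). -/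
/-- For a `σ`-derivation `d` between associative algebras, the
intertwining identity `(σ(ab) − σ(a)σ(b))·d(c) = d(a)·(σ(bc) − σ(b)σ(c))` holds. -/
theorem sigma_derivation_intertwining
    {A B : Type*} [Ring A] [Algebra ℂ A] [Ring B] [Algebra ℂ B]
    (σ : A →ₗ[ℂ] B) (d : A →ₗ[ℂ] B)
    (hd : ∀ a b : A, d (a * b) = d a * σ b + σ a * d b) :
    ∀ a b c : A,
      (σ (a * b) - σ a * σ b) * d c = d a * (σ (b * c) - σ b * σ c) := by
  intro a b c
  have key : d (a * b) * σ c + σ (a * b) * d c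
      = d a * σ (b * c) + σ a * d (b * c) := by
    rw [← hd, ← hd, mul_assoc]
  rw [hd a b, hd b c] at key
  have h : σ (a * b) * d c + d a * (σ b * σ c) + σ a * (d b * σ c)
      = d a * σ (b * c) + σ a * σ b * d c + σ a * (d b * σ c) := by
    calc σ (a * b) * d c + d a * (σ b * σ c) + σ a * (d b * σ c)
        = (d a * σ b + σ a * d b) * σ c + σ (a * b) * d c := by noncomm_ring
      _ = d a * σ (b * c) + σ a * (d b * σ c + σ b * d c) := key
      _ = d a * σ (b * c) + σ a * σ b * d c + σ a * (d b * σ c) := by noncomm_ring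
  have h2 := add_right_cancel h
  rw [sub_mul, mul_sub, sub_eq_sub_iff_add_eq_add]
  exact h2
end

section
/- Let M and N be von Neumann algebras acting on complex Hilbert spaces H₁ and H₂ respectively, let ρ : M → N be a surjective *-homomorphism, and suppose there is a central projection Q ∈ M (Q = Q* = Q², QA = AQ for all A ∈ M) such that ker ρ = {AQ : A ∈ M}; set P := I − Q and MP := {AP : A ∈ M}, and let ρ̃ denote the restriction of ρ to MP (a bijection onto N). If δ : M → N is a *-ρ-derivation, then the map D := ρ̃⁻¹ ∘ (δ restricted to MP) : MP → MP is an ordinary derivation: D(XY) = D(X)·Y + X·D(Y) for all X, Y ∈ MP. -/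
set_option maxHeartbeats 2000000 in
set_option synthInstance.maxHeartbeats 1000000 in
/-- With `ρ : M → N` a surjective `*`-homomorphism whose kernel is `MQ`
for a central projection `Q`, `P := I − Q`, and `ρ̃` the (bijective) restriction of `ρ`
to `MP`, for any `*`-`ρ`-derivation `δ : M → N` the map `D := ρ̃⁻¹ ∘ δ|_{MP}` is an
ordinary derivation on `MP`: `D(XY) = D(X)Y + X D(Y)`.  (We express `D X` as the
element `DX ∈ MP` with `ρ DX = δ X`.) -/
theorem pullback_of_star_rho_derivation_is_derivation
    {H₁ : Type*} [NormedAddCommGroup H₁] [InnerProductSpace ℂ H₁] [CompleteSpace H₁]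
    {H₂ : Type*} [NormedAddCommGroup H₂] [InnerProductSpace ℂ H₂] [CompleteSpace H₂]
    (M : VonNeumannAlgebra H₁) (N : VonNeumannAlgebra H₂)
    (ρ : M.toStarSubalgebra →⋆ₐ[ℂ] N.toStarSubalgebra)
    (hρsurj : Function.Surjective ρ)
    (Q : M.toStarSubalgebra)
    (hQstar : star Q = Q) (hQidem : Q * Q = Q)
    (hQcentral : ∀ A : M.toStarSubalgebra, Q * A = A * Q)
    (hker : {X : M.toStarSubalgebra | ρ X = 0}
      = {X : M.toStarSubalgebra | ∃ A : M.toStarSubalgebra, X = A * Q})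
    (δ : M.toStarSubalgebra →ₗ[ℂ] N.toStarSubalgebra)
    (hδstar : ∀ A : M.toStarSubalgebra, δ (star A) = star (δ A))
    (hδder : ∀ A B : M.toStarSubalgebra, δ (A * B) = δ A * ρ B + ρ A * δ B) :
    ∀ X Y DX DY DXY : M.toStarSubalgebra,
      (∃ A : M.toStarSubalgebra, X = A * (1 - Q)) →
      (∃ A : M.toStarSubalgebra, Y = A * (1 - Q)) →
      (∃ A : M.toStarSubalgebra, DX = A * (1 - Q)) →
      (∃ A : M.toStarSubalgebra, DY = A * (1 - Q)) →
      (∃ A : M.toStarSubalgebra, DXY = A * (1 - Q)) →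
      ρ DX = δ X → ρ DY = δ Y → ρ DXY = δ (X * Y) →
      DXY = DX * Y + X * DY := by
  rintro X Y DX DY DXY ⟨A, hA⟩ ⟨B, hB⟩ ⟨C, hC⟩ ⟨D, hD⟩ ⟨E, hE⟩ h1 h2 h3
  have hP : (1 - Q) * (1 - Q) = 1 - Q := by
    rw [sub_mul, one_mul, mul_sub, mul_one, hQidem]; simp
  have hmul : ∀ W : M.toStarSubalgebra, (W * (1 - Q)) * (1 - Q) = W * (1 - Q) := by
    intro W; rw [mul_assoc, hP]
  have hZ : ρ (DXY - (DX * Y + X * DY)) = 0 := by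
    have r1 : ρ (DXY - (DX * Y + X * DY)) = ρ DXY - (ρ (DX * Y) + ρ (X * DY)) := by
      rw [map_sub ρ, map_add ρ]
    rw [r1, map_mul ρ, map_mul ρ, h1, h2, h3, hδder X Y]
    abel
  have hF : ∃ F : M.toStarSubalgebra, DXY - (DX * Y + X * DY) = F * Q := by
    have := Set.ext_iff.mp hker (DXY - (DX * Y + X * DY))
    exact this.mp hZ
  obtain ⟨F, hF⟩ := hF
  have e1 : DXY * (1 - Q) = DXY := by rw [hE, hmul]
  have e2 : (DX * Y) * (1 - Q) = DX * Y := by rw [hB, ← mul_assoc, hmul]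
  have e3 : (X * DY) * (1 - Q) = X * DY := by rw [hD, ← mul_assoc, hmul]
  have hQ0 : Q * (1 - Q) = 0 := by rw [mul_sub, mul_one, hQidem, sub_self]
  have hzero : DXY - (DX * Y + X * DY) = 0 := by
    calc DXY - (DX * Y + X * DY)
        = (DXY - (DX * Y + X * DY)) * (1 - Q) := by rw [sub_mul, add_mul, e1, e2, e3]
      _ = F * Q * (1 - Q) := by rw [hF]
      _ = 0 := by rw [mul_assoc, hQ0, mul_zero]
  exact sub_eq_zero.mp hzero
end

section
/- Let M be a von Neumann algebra acting on a complex Hilbert space H, let σ : M → M be a *-linear map and let d : M → M be a *-σ-derivation. Set K := ⋂_{B,C ∈ M} ker(σ(BC) − σ(B)σ(C)) and let P be the orthogonal projection of H onto K. Then σ(A)P = Pσ(A) and d(A)P = Pd(A) for all A ∈ M. -/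
/-- If `T` and `star T` both leave `K` invariant, and `P` is the (self-adjoint)
projection onto `K`, then `T` commutes with `P`. -/
private lemma key_commute {H : Type*} [NormedAddCommGroup H] [InnerProductSpace ℂ H]
    [CompleteSpace H] (K : Submodule ℂ H) (P : H →L[ℂ] H) (hPsa : IsSelfAdjoint P)
    (hPrange : ∀ x : H, P x ∈ K) (hPfix : ∀ k ∈ K, P k = k)
    (T : H →L[ℂ] H) (hT : ∀ x ∈ K, T x ∈ K) (hT' : ∀ x ∈ K, (star T) x ∈ K) :
    T * P = P * T := by
  have h1 : P * (T * P) = T * P := by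
    ext x
    simp only [ContinuousLinearMap.mul_apply]
    exact hPfix _ (hT _ (hPrange x))
  have h2 : P * (star T * P) = star T * P := by
    ext x
    simp only [ContinuousLinearMap.mul_apply]
    exact hPfix _ (hT' _ (hPrange x))
  have h3 := congrArg star h2
  simp only [star_mul, star_star, hPsa.star_eq] at h3
  -- h3 : (P * T) * P = P * T  (up to associativity)
  calc T * P = P * (T * P) := h1.symm
    _ = (P * T) * P := by rw [mul_assoc]
    _ = P * T := h3

set_option maxHeartbeats 1000000 in
/-- Let `σ : M → M` be a `*`-linear map on a von Neumann algebra and `d` a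
`*`-`σ`-derivation.  If `P` is the orthogonal projection of `H` onto
`K := ⋂_{B,C} ker(σ(BC) − σ(B)σ(C))`, then `P` commutes with every `σ(A)` and `d(A)`. -/
theorem projection_commutes_with_sigma_and_d
    {H : Type*} [NormedAddCommGroup H] [InnerProductSpace ℂ H] [CompleteSpace H]
    (M : VonNeumannAlgebra H)
    (σ : M.toStarSubalgebra →ₗ[ℂ] M.toStarSubalgebra)
    (hσstar : ∀ A : M.toStarSubalgebra, σ (star A) = star (σ A))
    (d : M.toStarSubalgebra →ₗ[ℂ] M.toStarSubalgebra)
    (hdstar : ∀ A : M.toStarSubalgebra, d (star A) = star (d A))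
    (hdder : ∀ A B : M.toStarSubalgebra, d (A * B) = d A * σ B + σ A * d B)
    (K : Submodule ℂ H)
    (hK : K = ⨅ (B : M.toStarSubalgebra) (C : M.toStarSubalgebra),
      LinearMap.ker (((σ (B * C) : H →L[ℂ] H) - (σ B : H →L[ℂ] H) * (σ C : H →L[ℂ] H) : H →L[ℂ] H) : H →ₗ[ℂ] H))
    (P : H →L[ℂ] H) (hPsa : IsSelfAdjoint P)
    (hPrange : ∀ x : H, P x ∈ K) (hPfix : ∀ k ∈ K, P k = k) :
    ∀ A : M.toStarSubalgebra,
      (σ A : H →L[ℂ] H) * P = P * (σ A : H →L[ℂ] H) ∧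
      (d A : H →L[ℂ] H) * P = P * (d A : H →L[ℂ] H) := by
  have hmem : ∀ x : H, x ∈ K ↔ ∀ B C : M.toStarSubalgebra,
      (σ (B * C) : H →L[ℂ] H) x = (σ B : H →L[ℂ] H) ((σ C : H →L[ℂ] H) x) := by
    intro x
    rw [hK]
    simp only [Submodule.mem_iInf, LinearMap.mem_ker, ContinuousLinearMap.coe_coe, ContinuousLinearMap.coe_sub',
      Pi.sub_apply, ContinuousLinearMap.mul_apply, sub_eq_zero]
  -- K is invariant under σ A
  have hσinv : ∀ (A : M.toStarSubalgebra), ∀ x ∈ K, (σ A : H →L[ℂ] H) x ∈ K := by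
    intro A x hx
    rw [hmem] at hx ⊢
    intro B C
    have h1 := hx (B * C) A
    rw [mul_assoc] at h1
    have h2 := hx B (C * A)
    have h3 := hx C A
    rw [← h1, h2, h3]
  -- K is invariant under d A
  have hdinv : ∀ (A : M.toStarSubalgebra), ∀ x ∈ K, (d A : H →L[ℂ] H) x ∈ K := by
    intro A x hx
    have hx' := (hmem x).1 hx
    rw [hmem]
    intro B C
    have e1 : (d ((B * C) * A) : H →L[ℂ] H) x
        = (d (B * C) : H →L[ℂ] H) ((σ A : H →L[ℂ] H) x)
          + (σ (B * C) : H →L[ℂ] H) ((d A : H →L[ℂ] H) x) := by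
      rw [hdder]
      simp only [AddMemClass.coe_add, MulMemClass.coe_mul, ContinuousLinearMap.add_apply,
        ContinuousLinearMap.mul_apply]
    have e2 : (d (B * C) : H →L[ℂ] H) ((σ A : H →L[ℂ] H) x)
        = (d B : H →L[ℂ] H) ((σ C : H →L[ℂ] H) ((σ A : H →L[ℂ] H) x))
          + (σ B : H →L[ℂ] H) ((d C : H →L[ℂ] H) ((σ A : H →L[ℂ] H) x)) := by
      rw [hdder]
      simp only [AddMemClass.coe_add, MulMemClass.coe_mul, ContinuousLinearMap.add_apply,
        ContinuousLinearMap.mul_apply]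
    have e3 : (d (B * (C * A)) : H →L[ℂ] H) x
        = (d B : H →L[ℂ] H) ((σ (C * A) : H →L[ℂ] H) x)
          + (σ B : H →L[ℂ] H) ((d (C * A) : H →L[ℂ] H) x) := by
      rw [hdder]
      simp only [AddMemClass.coe_add, MulMemClass.coe_mul, ContinuousLinearMap.add_apply,
        ContinuousLinearMap.mul_apply]
    have e4 : (d (C * A) : H →L[ℂ] H) x
        = (d C : H →L[ℂ] H) ((σ A : H →L[ℂ] H) x)
          + (σ C : H →L[ℂ] H) ((d A : H →L[ℂ] H) x) := by
      rw [hdder]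
      simp only [AddMemClass.coe_add, MulMemClass.coe_mul, ContinuousLinearMap.add_apply,
        ContinuousLinearMap.mul_apply]
    rw [mul_assoc] at e1
    rw [e3, e4, hx' C A, map_add] at e1
    rw [e2] at e1
    -- e1 : dB(σC(σA x)) + σB(dC(σA x) + σC(dA x))
    --      = dB(σC(σA x)) + σB(dC(σA x)) + σ(B*C)(dA x)
    rw [← add_assoc] at e1
    exact (add_left_cancel e1).symm
  intro A
  constructor
  · refine key_commute K P hPsa hPrange hPfix _ (hσinv A) ?_
    intro x hx
    have hc : star ((σ A : H →L[ℂ] H)) = ((σ (star A) : H →L[ℂ] H)) := by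
      rw [hσstar]; rfl
    rw [hc]
    exact hσinv (star A) x hx
  · refine key_commute K P hPsa hPrange hPfix _ (hdinv A) ?_
    intro x hx
    have hc : star ((d A : H →L[ℂ] H)) = ((d (star A) : H →L[ℂ] H)) := by
      rw [hdstar]; rfl
    rw [hc]
    exact hdinv (star A) x hx
end

section
/- Let M be a von Neumann algebra acting on a complex Hilbert space H, let σ : M → M be a surjective *-linear map and let d : M → M be a *-σ-derivation. Set K := ⋂_{B,C ∈ M} ker(σ(BC) − σ(B)σ(C)) and let P be the orthogonal projection of H onto K. Define ρ(A) := σ(A)P and δ(A) := d(A)P for A ∈ M. Then ρ : M → B(H) is a *-homomorphism (ρ(AB) = ρ(A)ρ(B) and ρ(A*) = ρ(A)* for all A, B ∈ M) whose range is {AP : A ∈ M}, and δ is a *-ρ-derivation: δ(AB) = δ(A)ρ(B) + ρ(A)δ(B) and δ(A*) = δ(A)* for all A, B ∈ M. -/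
set_option maxHeartbeats 1000000 in
/-- With `σ : M → M` a surjective `*`-linear map, `d` a `*`-`σ`-derivation,
`K := ⋂_{B,C} ker(σ(BC) − σ(B)σ(C))` and `P` the orthogonal projection onto `K`, the maps
`ρ(A) := σ(A)P` and `δ(A) := d(A)P` satisfy: `ρ` is a `*`-homomorphism with range
`{AP : A ∈ M}` and `δ` is a `*`-`ρ`-derivation. -/
theorem compression_is_star_hom_and_derivation
    {H : Type*} [NormedAddCommGroup H] [InnerProductSpace ℂ H] [CompleteSpace H]
    (M : VonNeumannAlgebra H)
    (σ : M.toStarSubalgebra →ₗ[ℂ] M.toStarSubalgebra)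
    (hσstar : ∀ A : M.toStarSubalgebra, σ (star A) = star (σ A))
    (hσsurj : Function.Surjective σ)
    (d : M.toStarSubalgebra →ₗ[ℂ] M.toStarSubalgebra)
    (hdstar : ∀ A : M.toStarSubalgebra, d (star A) = star (d A))
    (hdder : ∀ A B : M.toStarSubalgebra, d (A * B) = d A * σ B + σ A * d B)
    (K : Submodule ℂ H)
    (hK : K = ⨅ (B : M.toStarSubalgebra) (C : M.toStarSubalgebra),
      LinearMap.ker (((σ (B * C) : H →L[ℂ] H) - (σ B : H →L[ℂ] H) * (σ C : H →L[ℂ] H) : H →L[ℂ] H) : H →ₗ[ℂ] H))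
    (P : H →L[ℂ] H) (hPsa : IsSelfAdjoint P)
    (hPrange : ∀ x : H, P x ∈ K) (hPfix : ∀ k ∈ K, P k = k)
    (ρ δ : M.toStarSubalgebra → H →L[ℂ] H)
    (hρ : ∀ A : M.toStarSubalgebra, ρ A = (σ A : H →L[ℂ] H) * P)
    (hδ : ∀ A : M.toStarSubalgebra, δ A = (d A : H →L[ℂ] H) * P) :
    (∀ A B : M.toStarSubalgebra, ρ (A * B) = ρ A * ρ B) ∧
    (∀ A : M.toStarSubalgebra, ρ (star A) = star (ρ A)) ∧
    (Set.range ρ = {X : H →L[ℂ] H | ∃ A : M.toStarSubalgebra, X = (A : H →L[ℂ] H) * P}) ∧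
    (∀ A B : M.toStarSubalgebra, δ (A * B) = δ A * ρ B + ρ A * δ B) ∧
    (∀ A : M.toStarSubalgebra, δ (star A) = star (δ A)) := by

  have memK : ∀ x : H, x ∈ K ↔ ∀ B C : M.toStarSubalgebra,
      (σ (B * C) : H →L[ℂ] H) x = (σ B : H →L[ℂ] H) ((σ C : H →L[ℂ] H) x) := by
    intro x
    rw [hK]
    simp only [Submodule.mem_iInf, LinearMap.mem_ker, ContinuousLinearMap.coe_coe, ContinuousLinearMap.coe_sub',
      Pi.sub_apply, ContinuousLinearMap.mul_apply, sub_eq_zero]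
  have KinvS : ∀ (B : M.toStarSubalgebra) (k : H), k ∈ K → (σ B : H →L[ℂ] H) k ∈ K := by
    intro B k hk
    rw [memK]
    intro X Y
    have h1 := (memK k).1 hk (X * Y) B
    have h2 := (memK k).1 hk X (Y * B)
    have h3 := (memK k).1 hk Y B
    rw [← h1, ← h3, ← h2, mul_assoc]
  have KinvD : ∀ (B : M.toStarSubalgebra) (k : H), k ∈ K → (d B : H →L[ℂ] H) k ∈ K := by
    intro B k hk
    rw [memK]
    intro X Y
    have e : (d X) * σ (Y * B) + σ X * (d Y * σ B + σ Y * d B)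
        = (d X * σ Y + σ X * d Y) * σ B + σ (X * Y) * d B := by
      rw [← hdder Y B, ← hdder X Y, ← hdder X (Y * B), ← hdder (X * Y) B, mul_assoc]
    have e' := congrArg (fun T : M.toStarSubalgebra => (T : H →L[ℂ] H) k) e
    simp only [MulMemClass.coe_mul, AddMemClass.coe_add, ContinuousLinearMap.add_apply,
      ContinuousLinearMap.mul_apply, map_add, add_mul] at e'
    rw [(memK k).1 hk Y B] at e'
    rw [← add_assoc] at e'
    exact (add_left_cancel e').symm
  have hP2 : ∀ x : H, P (P x) = P x := fun x => hPfix _ (hPrange x)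
  have hPstar : star P = P := hPsa.star_eq
  have comm : ∀ T : H →L[ℂ] H, (∀ x, T (P x) ∈ K) → (∀ x, (star T) (P x) ∈ K) →
      P * T = T * P := by
    intro T h1 h2
    have f1 : P * T * P = T * P := by
      ext x
      simp only [ContinuousLinearMap.mul_apply]
      exact hPfix _ (h1 x)
    have f2 : P * star T * P = star T * P := by
      ext x
      simp only [ContinuousLinearMap.mul_apply]
      exact hPfix _ (h2 x)
    have f3 := congrArg star f2
    simp only [star_mul, star_star, hPstar] at f3
    rw [← mul_assoc] at f3
    rw [← f3]
    exact f1
  have coeStarS : ∀ B : M.toStarSubalgebra,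
      star ((σ B : H →L[ℂ] H)) = (σ (star B) : H →L[ℂ] H) := by
    intro B
    rw [hσstar]
    rfl
  have coeStarD : ∀ B : M.toStarSubalgebra,
      star ((d B : H →L[ℂ] H)) = (d (star B) : H →L[ℂ] H) := by
    intro B
    rw [hdstar]
    rfl
  have commS : ∀ B : M.toStarSubalgebra, P * (σ B : H →L[ℂ] H) = (σ B : H →L[ℂ] H) * P := by
    intro B
    refine comm _ (fun x => KinvS B _ (hPrange x)) (fun x => ?_)
    rw [coeStarS]
    exact KinvS (star B) _ (hPrange x)
  have commD : ∀ B : M.toStarSubalgebra, P * (d B : H →L[ℂ] H) = (d B : H →L[ℂ] H) * P := by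
    intro B
    refine comm _ (fun x => KinvD B _ (hPrange x)) (fun x => ?_)
    rw [coeStarD]
    exact KinvD (star B) _ (hPrange x)
  refine ⟨?_, ?_, ?_, ?_, ?_⟩
  · intro A B
    ext x
    simp only [hρ, ContinuousLinearMap.mul_apply]
    rw [hPfix _ (KinvS B _ (hPrange x))]
    exact (memK (P x)).1 (hPrange x) A B
  · intro A
    rw [hρ, hρ, star_mul, hPstar, coeStarS, ← commS]
  · ext X
    constructor
    · rintro ⟨A, rfl⟩
      exact ⟨σ A, (hρ A).symm ▸ rfl⟩
    · rintro ⟨A, rfl⟩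
      obtain ⟨B, hB⟩ := hσsurj A
      exact ⟨B, by rw [hρ, hB]⟩
  · intro A B
    ext x
    simp only [hρ, hδ, ContinuousLinearMap.add_apply, ContinuousLinearMap.mul_apply]
    rw [hPfix _ (KinvS B _ (hPrange x)), hPfix _ (KinvD B _ (hPrange x))]
    have e := congrArg (fun T : M.toStarSubalgebra => (T : H →L[ℂ] H) (P x)) (hdder A B)
    simpa only [MulMemClass.coe_mul, AddMemClass.coe_add, ContinuousLinearMap.add_apply,
      ContinuousLinearMap.mul_apply] using e
  · intro A
    rw [hδ, hδ, star_mul, hPstar, coeStarD, ← commD]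
end

section
/- Let M be a von Neumann algebra acting on a complex Hilbert space H containing the identity operator I, let σ : M → M be a surjective *-linear map and let d : M → M be a *-σ-derivation such that d(I) is central in M (d(I)A = A d(I) for all A ∈ M). Set K := ⋂_{B,C ∈ M} ker(σ(BC) − σ(B)σ(C)). Then d(I)k = 0 for every k ∈ K. -/
/-- If `σ : M → M` is a surjective `*`-linear map on a von Neumann algebra
and `d` is a `*`-`σ`-derivation with `d(I)` central, then `d(I)` vanishes on
`K := ⋂_{B,C} ker(σ(BC) − σ(B)σ(C))`. -/
theorem d_one_vanishes_on_K
    {H : Type*} [NormedAddCommGroup H] [InnerProductSpace ℂ H] [CompleteSpace H]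
    (M : VonNeumannAlgebra H)
    (σ : M.toStarSubalgebra →ₗ[ℂ] M.toStarSubalgebra)
    (hσstar : ∀ A : M.toStarSubalgebra, σ (star A) = star (σ A))
    (hσsurj : Function.Surjective σ)
    (d : M.toStarSubalgebra →ₗ[ℂ] M.toStarSubalgebra)
    (hdstar : ∀ A : M.toStarSubalgebra, d (star A) = star (d A))
    (hdder : ∀ A B : M.toStarSubalgebra, d (A * B) = d A * σ B + σ A * d B)
    (hdIcentral : ∀ A : M.toStarSubalgebra, d 1 * A = A * d 1)
    (K : Submodule ℂ H)
    (hK : K = ⨅ (B : M.toStarSubalgebra) (C : M.toStarSubalgebra),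
      LinearMap.ker (((σ (B * C) : H →L[ℂ] H) - (σ B : H →L[ℂ] H) * (σ C : H →L[ℂ] H) : H →L[ℂ] H) : H →ₗ[ℂ] H)) :
    ∀ k ∈ K, (d 1 : H →L[ℂ] H) k = 0 := by
  intro k hk
  -- pick E with σ E = 1
  obtain ⟨E, hE⟩ := hσsurj 1
  -- from k ∈ K with B = E, C = 1 : σ 1 k = k
  subst hK
  have h1 : ((σ (E * 1) : H →L[ℂ] H) - (σ E : H →L[ℂ] H) * (σ 1 : H →L[ℂ] H)) k = 0 := by
    simp only [Submodule.mem_iInf] at hk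
    exact hk E 1
  have hfix : (σ 1 : H →L[ℂ] H) k = k := by
    rw [mul_one, hE] at h1
    simp only [ContinuousLinearMap.sub_apply, ContinuousLinearMap.mul_apply,
      OneMemClass.coe_one, ContinuousLinearMap.one_apply, sub_eq_zero] at h1
    exact h1.symm
  -- d 1 = d 1 * σ 1 + σ 1 * d 1 = 2 • (d 1 * σ 1)
  have hd1 : d 1 = d 1 * σ 1 + d 1 * σ 1 := by
    calc d 1 = d (1 * 1) := by rw [one_mul]
    _ = d 1 * σ 1 + σ 1 * d 1 := hdder 1 1
    _ = d 1 * σ 1 + d 1 * σ 1 := by rw [← hdIcentral (σ 1)]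
  have happ : (d 1 : H →L[ℂ] H) k = (d 1 : H →L[ℂ] H) k + (d 1 : H →L[ℂ] H) k := by
    conv_lhs => rw [hd1]
    simp only [AddMemClass.coe_add, MulMemClass.coe_mul, ContinuousLinearMap.add_apply,
      ContinuousLinearMap.mul_apply, hfix]
  exact left_eq_add.mp happ
end

section
/- Let M be a von Neumann algebra acting on a complex Hilbert space H containing the identity operator I, let σ : M → M be a surjective *-linear map and let d : M → M be a *-σ-derivation such that d(I) is central in M (d(I)A = A d(I) for all A ∈ M). Let K := ⋂_{B,C ∈ M} ker(σ(BC) − σ(B)σ(C)) and let L := K^⊥. Assume that the image d(I)(L) is dense in L. Then σ(I)ℓ = (1/2)ℓ for every ℓ ∈ L. -/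
/-!
Applying the `σ`-derivation rule to `I = I · I` and using that `d(I)` is central gives
`d(I) = 2 σ(I) d(I)`, so `σ(I) - 1/2` vanishes on the range of `d(I)`. Its kernel is closed,
hence contains the closure of `d(I)(L)`, which is `L`.
-/

theorem mul_map_one_eq_half_smul_of_commute {k A : Type*} [Field k] [NeZero (2 : k)] [Ring A]
    [Algebra k A] (σ d : A → A) (hder : ∀ a b, d (a * b) = d a * σ b + σ a * d b)
    (hcomm : Commute (d 1) (σ 1)) :
    σ 1 * d 1 = (2⁻¹ : k) • d 1 := by
  have hone : d 1 = (2 : k) • (σ 1 * d 1) := by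
    simpa [hcomm.eq, two_smul] using hder 1 1
  nth_rw 2 [hone]
  rw [smul_smul, inv_mul_cancel₀ (two_ne_zero), one_smul]

theorem ContinuousLinearMap.apply_eq_smul_of_mul_eq_smul {𝕜 E : Type*} [NormedField 𝕜]
    [NormedAddCommGroup E] [NormedSpace 𝕜 E] {S T : E →L[𝕜] E} {c : 𝕜} (h : S * T = c • T)
    {L : Submodule 𝕜 E} (hL : (L.map (T : E →ₗ[𝕜] E)).topologicalClosure = L) :
    ∀ x ∈ L, S x = c • x := by
  have hrange :
      L.map (T : E →ₗ[𝕜] E) ≤ LinearMap.ker ((S - c • 1 : E →L[𝕜] E) : E →ₗ[𝕜] E) := by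
    rintro _ ⟨y, -, rfl⟩
    simpa [sub_eq_zero] using congr($h y)
  intro x hx
  rw [← hL] at hx
  simpa [sub_eq_zero] using
    Submodule.topologicalClosure_minimal _ hrange (S - c • 1).isClosed_ker hx

theorem sigma_one_is_half_on_L_general
    {H : Type*} [NormedAddCommGroup H] [InnerProductSpace ℂ H] [CompleteSpace H]
    (M : VonNeumannAlgebra H)
    (σ : M.toStarSubalgebra →ₗ[ℂ] M.toStarSubalgebra)
    (d : M.toStarSubalgebra →ₗ[ℂ] M.toStarSubalgebra)
    (hdder : ∀ A B : M.toStarSubalgebra, d (A * B) = d A * σ B + σ A * d B)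
    (hdIcentral : ∀ A : M.toStarSubalgebra, d 1 * A = A * d 1)
    (L : Submodule ℂ H)
    (hdense : (Submodule.map ((d 1 : H →L[ℂ] H) : H →ₗ[ℂ] H) L).topologicalClosure = L) :
    ∀ ℓ ∈ L, (σ 1 : H →L[ℂ] H) ℓ = (1 / 2 : ℂ) • ℓ := by
  have hhalf : σ 1 * d 1 = (2⁻¹ : ℂ) • d 1 :=
    mul_map_one_eq_half_smul_of_commute σ d hdder (hdIcentral (σ 1))
  have hop : (σ 1 : H →L[ℂ] H) * (d 1 : H →L[ℂ] H) = (1 / 2 : ℂ) • (d 1 : H →L[ℂ] H) := by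
    rw [one_div]
    exact congr(($hhalf : H →L[ℂ] H))
  exact ContinuousLinearMap.apply_eq_smul_of_mul_eq_smul hop hdense

/-- Let `σ : M → M` be a surjective `*`-linear map on a von Neumann
algebra, `d` a `*`-`σ`-derivation with `d(I)` central,
`K := ⋂_{B,C} ker(σ(BC) − σ(B)σ(C))` and `L := K^⊥`.  If `d(I)(L)` is dense in `L`,
then `σ(I)ℓ = (1/2)ℓ` for every `ℓ ∈ L`. -/
theorem sigma_one_is_half_on_L
    {H : Type*} [NormedAddCommGroup H] [InnerProductSpace ℂ H] [CompleteSpace H]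
    (M : VonNeumannAlgebra H)
    (σ : M.toStarSubalgebra →ₗ[ℂ] M.toStarSubalgebra)
    (hσstar : ∀ A : M.toStarSubalgebra, σ (star A) = star (σ A))
    (hσsurj : Function.Surjective σ)
    (d : M.toStarSubalgebra →ₗ[ℂ] M.toStarSubalgebra)
    (hdstar : ∀ A : M.toStarSubalgebra, d (star A) = star (d A))
    (hdder : ∀ A B : M.toStarSubalgebra, d (A * B) = d A * σ B + σ A * d B)
    (hdIcentral : ∀ A : M.toStarSubalgebra, d 1 * A = A * d 1)
    (K : Submodule ℂ H)
    (hK : K = ⨅ (B : M.toStarSubalgebra) (C : M.toStarSubalgebra),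
      LinearMap.ker (((σ (B * C) : H →L[ℂ] H) - (σ B : H →L[ℂ] H) * (σ C : H →L[ℂ] H) : H →L[ℂ] H) : H →ₗ[ℂ] H))
    (L : Submodule ℂ H) (hL : L = Kᗮ)
    (hdense : (Submodule.map ((d 1 : H →L[ℂ] H) : H →ₗ[ℂ] H) L).topologicalClosure = L) :
    ∀ ℓ ∈ L, (σ 1 : H →L[ℂ] H) ℓ = (1 / 2 : ℂ) • ℓ :=
  sigma_one_is_half_on_L_general M σ d hdder hdIcentral L hdense
end

section
/- Let M be a von Neumann algebra acting on a complex Hilbert space H containing the identity operator I, let σ : M → M be a surjective *-linear map and let d : M → M be a *-σ-derivation such that d(I) is central in M (d(I)A = A d(I) for all A ∈ M). Let K := ⋂_{B,C ∈ M} ker(σ(BC) − σ(B)σ(C)) and let L := K^⊥. Assume that the image d(I)(L) is dense in L. Then d(A)ℓ = 2 d(I) σ(A) ℓ for every A ∈ M and every ℓ ∈ L. -/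
set_option maxHeartbeats 1000000


/-- Let `σ : M → M` be a surjective `*`-linear map on a von Neumann
algebra, `d` a `*`-`σ`-derivation with `d(I)` central,
`K := ⋂_{B,C} ker(σ(BC) − σ(B)σ(C))` and `L := K^⊥`.  If `d(I)(L)` is dense in `L`,
then `d(A)ℓ = 2 d(I) σ(A) ℓ` for every `A ∈ M` and `ℓ ∈ L`. -/
theorem d_eq_two_dI_sigma_on_L
    {H : Type*} [NormedAddCommGroup H] [InnerProductSpace ℂ H] [CompleteSpace H]
    (M : VonNeumannAlgebra H)
    (σ : M.toStarSubalgebra →ₗ[ℂ] M.toStarSubalgebra)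
    (hσstar : ∀ A : M.toStarSubalgebra, σ (star A) = star (σ A))
    (hσsurj : Function.Surjective σ)
    (d : M.toStarSubalgebra →ₗ[ℂ] M.toStarSubalgebra)
    (hdstar : ∀ A : M.toStarSubalgebra, d (star A) = star (d A))
    (hdder : ∀ A B : M.toStarSubalgebra, d (A * B) = d A * σ B + σ A * d B)
    (hdIcentral : ∀ A : M.toStarSubalgebra, d 1 * A = A * d 1)
    (K : Submodule ℂ H)
    (hK : K = ⨅ (B : M.toStarSubalgebra) (C : M.toStarSubalgebra),
      LinearMap.ker (((σ (B * C) : H →L[ℂ] H) - (σ B : H →L[ℂ] H) * (σ C : H →L[ℂ] H) : H →L[ℂ] H) : H →ₗ[ℂ] H))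
    (L : Submodule ℂ H) (hL : L = Kᗮ)
    (hdense : (Submodule.map ((d 1 : H →L[ℂ] H) : H →ₗ[ℂ] H) L).topologicalClosure = L) :
    ∀ A : M.toStarSubalgebra, ∀ ℓ ∈ L,
      (d A : H →L[ℂ] H) ℓ = (2 : ℂ) • (d 1 : H →L[ℂ] H) ((σ A : H →L[ℂ] H) ℓ) := by
  intro A ℓ hℓ
  -- d 1 = σ 1 * d 1 + σ 1 * d 1
  have h1 : d 1 = σ 1 * d 1 + σ 1 * d 1 := by
    have h := hdder 1 1
    rw [one_mul] at h
    calc d 1 = d 1 * σ 1 + σ 1 * d 1 := h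
    _ = σ 1 * d 1 + σ 1 * d 1 := by rw [hdIcentral (σ 1)]

  have hE1 : d 1 - σ 1 * d 1 - σ 1 * d 1 = 0 := by
    nth_rewrite 1 [h1]; abel
  -- d A = d 1 * σ A + σ 1 * d A
  have hdA : d A = d 1 * σ A + σ 1 * d A := by
    have h := hdder 1 A
    rwa [one_mul] at h
  have hcomm : d A * d 1 = d 1 * d A := (hdIcentral (d A)).symm
  have h3 : (d A - σ 1 * d A - σ 1 * d A) * d 1 = 0 := by
    have e : (d A - σ 1 * d A - σ 1 * d A) * d 1
        = (d 1 - σ 1 * d 1 - σ 1 * d 1) * d A := by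
      simp only [sub_mul, mul_assoc, hcomm]
    rw [e, hE1, zero_mul]
  -- pass to operators
  set T : H →L[ℂ] H :=
    ((d A - σ 1 * d A - σ 1 * d A : M.toStarSubalgebra) : H →L[ℂ] H) with hT
  have h3op : T * ((d 1 : M.toStarSubalgebra) : H →L[ℂ] H) = 0 := by
    rw [hT]
    have := congrArg (fun x : M.toStarSubalgebra => (x : H →L[ℂ] H)) h3
    simpa using this
  -- T kills d1 '' L, hence L by density
  have hLker : L ≤ LinearMap.ker (T : H →ₗ[ℂ] H) := by
    rw [← hdense]
    have hsub : Submodule.map (((d 1 : M.toStarSubalgebra) : H →L[ℂ] H) : H →ₗ[ℂ] H) L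
        ≤ LinearMap.ker (T : H →ₗ[ℂ] H) := by
      rintro x ⟨y, _, rfl⟩
      have := congrFun (congrArg (fun f : H →L[ℂ] H => (f : H → H)) h3op) y
      simpa using this
    exact Submodule.topologicalClosure_minimal _ hsub (ContinuousLinearMap.isClosed_ker T)
  have hTℓ : T ℓ = 0 := hLker hℓ
  have hTℓ' : (d A : H →L[ℂ] H) ℓ
      - (σ 1 : H →L[ℂ] H) ((d A : H →L[ℂ] H) ℓ)
      - (σ 1 : H →L[ℂ] H) ((d A : H →L[ℂ] H) ℓ) = 0 := by
    have : T ℓ = (d A : H →L[ℂ] H) ℓ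
        - (σ 1 : H →L[ℂ] H) ((d A : H →L[ℂ] H) ℓ)
        - (σ 1 : H →L[ℂ] H) ((d A : H →L[ℂ] H) ℓ) := by
      rw [hT]; simp [ContinuousLinearMap.sub_apply, ContinuousLinearMap.mul_apply]
    rw [← this, hTℓ]
  have hdAℓ : (d A : H →L[ℂ] H) ℓ
      = (d 1 : H →L[ℂ] H) ((σ A : H →L[ℂ] H) ℓ)
      + (σ 1 : H →L[ℂ] H) ((d A : H →L[ℂ] H) ℓ) := by
    have := congrFun (congrArg (fun x : M.toStarSubalgebra => ((x : H →L[ℂ] H) : H → H)) hdA) ℓ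
    simpa [ContinuousLinearMap.add_apply, ContinuousLinearMap.mul_apply] using this
  -- conclude
  set u := (d A : H →L[ℂ] H) ℓ
  set v := (d 1 : H →L[ℂ] H) ((σ A : H →L[ℂ] H) ℓ)
  set w := (σ 1 : H →L[ℂ] H) ((d A : H →L[ℂ] H) ℓ)
  -- hdAℓ : u = v + w, hTℓ' : u - w - w = 0
  have hw : u = w + w := by
    have := hTℓ'
    have : u - w - w = 0 := this
    linear_combination (norm := abel) this
  rw [two_smul]
  -- goal : u = v + v
  have hv : v = u - w := by rw [hdAℓ]; abel
  rw [hv, hw]; abel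
end

section
/- Let M be a von Neumann algebra acting on a complex Hilbert space H containing the identity operator I, let σ : M → M be a surjective *-linear map and let d : M → M be a *-σ-derivation such that d(I) is central in M (d(I)A = A d(I) for all A ∈ M). Let K := ⋂_{B,C ∈ M} ker(σ(BC) − σ(B)σ(C)) and let L := K^⊥. Assume that the image d(I)(L) is dense in L. Then σ(AB)ℓ = 2 σ(A) σ(B) ℓ for all A, B ∈ M and all ℓ ∈ L; in other words, the map A ↦ 2σ(A) restricted to L is multiplicative (A ↦ 2σ(A)|_L is a *-homomorphism). -/
set_option maxHeartbeats 2000000 in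
/-- Let `σ : M → M` be a surjective `*`-linear map on a von Neumann
algebra, `d` a `*`-`σ`-derivation with `d(I)` central,
`K := ⋂_{B,C} ker(σ(BC) − σ(B)σ(C))` and `L := K^⊥`.  If `d(I)(L)` is dense in `L`,
then `σ(AB)ℓ = 2 σ(A) σ(B) ℓ` for all `A, B ∈ M` and `ℓ ∈ L`; i.e. `A ↦ 2σ(A)`
restricted to `L` is multiplicative. -/
theorem two_sigma_multiplicative_on_L
    {H : Type*} [NormedAddCommGroup H] [InnerProductSpace ℂ H] [CompleteSpace H]
    (M : VonNeumannAlgebra H)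
    (σ : M.toStarSubalgebra →ₗ[ℂ] M.toStarSubalgebra)
    (hσstar : ∀ A : M.toStarSubalgebra, σ (star A) = star (σ A))
    (hσsurj : Function.Surjective σ)
    (d : M.toStarSubalgebra →ₗ[ℂ] M.toStarSubalgebra)
    (hdstar : ∀ A : M.toStarSubalgebra, d (star A) = star (d A))
    (hdder : ∀ A B : M.toStarSubalgebra, d (A * B) = d A * σ B + σ A * d B)
    (hdIcentral : ∀ A : M.toStarSubalgebra, d 1 * A = A * d 1)
    (K : Submodule ℂ H)
    (hK : K = ⨅ (B : M.toStarSubalgebra) (C : M.toStarSubalgebra),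
      LinearMap.ker (((σ (B * C) : H →L[ℂ] H) - (σ B : H →L[ℂ] H) * (σ C : H →L[ℂ] H) : H →L[ℂ] H) : H →ₗ[ℂ] H))
    (L : Submodule ℂ H) (hL : L = Kᗮ)
    (hdense : (Submodule.map ((d 1 : H →L[ℂ] H) : H →ₗ[ℂ] H) L).topologicalClosure = L) :
    ∀ A B : M.toStarSubalgebra, ∀ ℓ ∈ L,
      (σ (A * B) : H →L[ℂ] H) ℓ
        = (2 : ℂ) • (σ A : H →L[ℂ] H) ((σ B : H →L[ℂ] H) ℓ) := by
  intro A B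
  -- pointwise evaluation of equalities in the subalgebra
  have coe_apply : ∀ {X Y : M.toStarSubalgebra}, X = Y → ∀ x : H,
      (X : H →L[ℂ] H) x = (Y : H →L[ℂ] H) x := by
    rintro X Y rfl x; rfl
  set D : H →L[ℂ] H := (d 1 : H →L[ℂ] H) with hDdef
  -- centrality, pointwise
  have central : ∀ (T : M.toStarSubalgebra) (x : H),
      D ((T : H →L[ℂ] H) x) = (T : H →L[ℂ] H) (D x) := by
    intro T x
    have h := coe_apply (hdIcentral T) x
    simpa [MulMemClass.coe_mul, ContinuousLinearMap.mul_apply] using h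
  -- the relation d X = d X ∘ σ 1 + σ X ∘ d 1, pointwise
  have q : ∀ (X : M.toStarSubalgebra) (x : H),
      (d X : H →L[ℂ] H) x
        = (d X : H →L[ℂ] H) ((σ 1 : H →L[ℂ] H) x)
          + (σ X : H →L[ℂ] H) (D x) := by
    intro X x
    have h := hdder X 1
    rw [mul_one] at h
    have h2 := coe_apply h x
    simpa [MulMemClass.coe_mul, AddMemClass.coe_add, ContinuousLinearMap.mul_apply,
      ContinuousLinearMap.add_apply] using h2
  have q' : ∀ (X : M.toStarSubalgebra) (x : H),
      (σ X : H →L[ℂ] H) (D x)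
        = (d X : H →L[ℂ] H) x - (d X : H →L[ℂ] H) ((σ 1 : H →L[ℂ] H) x) := by
    intro X x
    rw [eq_sub_iff_add_eq']
    exact (q X x).symm
  -- σ 1 acts as 1/2 on the range of D
  have half : ∀ x : H, (σ 1 : H →L[ℂ] H) (D x) = (2⁻¹ : ℂ) • D x := by
    intro x
    have h := q 1 x
    rw [← hDdef, central (σ 1) x] at h
    -- h : D x = σ1 (D x) + σ1 (D x)
    symm
    nth_rewrite 1 [h]
    rw [← two_smul ℂ, smul_smul]
    norm_num
  -- key density lemma: σ 1 acts as 1/2 on f(L) whenever f commutes with D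
  have key : ∀ f : H →L[ℂ] H, (∀ x : H, f (D x) = D (f x)) →
      ∀ m ∈ L, (σ 1 : H →L[ℂ] H) (f m) = (2⁻¹ : ℂ) • f m := by
    intro f hf m hm
    have hsub : L ≤ LinearMap.ker
        ((((σ 1 : H →L[ℂ] H).comp f) - (2⁻¹ : ℂ) • f : H →L[ℂ] H) : H →ₗ[ℂ] H) := by
      rw [← hdense]
      refine (Submodule.map (D : H →ₗ[ℂ] H) L).topologicalClosure_minimal ?_
        (ContinuousLinearMap.isClosed_ker _)
      rintro x hx
      rcases Submodule.mem_map.mp hx with ⟨y, -, rfl⟩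
      simp only [LinearMap.mem_ker, ContinuousLinearMap.coe_coe, ContinuousLinearMap.sub_apply,
        ContinuousLinearMap.coe_sub', Pi.sub_apply, ContinuousLinearMap.comp_apply,
        ContinuousLinearMap.smul_apply, ContinuousLinearMap.coe_smul', Pi.smul_apply]
      rw [hf, half, ← hf]
      simp
    have := hsub hm
    simp only [LinearMap.mem_ker, ContinuousLinearMap.coe_coe, ContinuousLinearMap.sub_apply,
      ContinuousLinearMap.coe_sub', Pi.sub_apply, ContinuousLinearMap.comp_apply,
      ContinuousLinearMap.smul_apply, ContinuousLinearMap.coe_smul', Pi.smul_apply] at this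
    exact sub_eq_zero.mp this
  have hm1 : ∀ m ∈ L, (σ 1 : H →L[ℂ] H) m = (2⁻¹ : ℂ) • m := by
    intro m hm
    simpa using key (ContinuousLinearMap.id ℂ H) (fun x => rfl) m hm
  have hmB : ∀ m ∈ L, (σ 1 : H →L[ℂ] H) ((σ B : H →L[ℂ] H) m)
      = (2⁻¹ : ℂ) • (σ B : H →L[ℂ] H) m :=
    key (σ B : H →L[ℂ] H) (fun x => (central (σ B) x).symm)
  -- derivation rule pointwise
  have q4 : ∀ x : H, (d (A * B) : H →L[ℂ] H) x
      = (d A : H →L[ℂ] H) ((σ B : H →L[ℂ] H) x)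
        + (σ A : H →L[ℂ] H) ((d B : H →L[ℂ] H) x) := by
    intro x
    have h2 := coe_apply (hdder A B) x
    simpa [MulMemClass.coe_mul, AddMemClass.coe_add, ContinuousLinearMap.mul_apply,
      ContinuousLinearMap.add_apply] using h2
  intro ℓ hℓ
  have hsub : L ≤ LinearMap.ker
      (((σ (A * B) : H →L[ℂ] H)
        - (2 : ℂ) • ((σ A : H →L[ℂ] H).comp (σ B : H →L[ℂ] H)) : H →L[ℂ] H) : H →ₗ[ℂ] H) := by
    rw [← hdense]
    refine (Submodule.map (D : H →ₗ[ℂ] H) L).topologicalClosure_minimal ?_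
      (ContinuousLinearMap.isClosed_ker _)
    rintro x hx
    rcases Submodule.mem_map.mp hx with ⟨m, hm, rfl⟩
    simp only [LinearMap.mem_ker, ContinuousLinearMap.coe_coe, ContinuousLinearMap.sub_apply,
      ContinuousLinearMap.coe_sub', Pi.sub_apply, ContinuousLinearMap.comp_apply,
      ContinuousLinearMap.smul_apply, ContinuousLinearMap.coe_smul', Pi.smul_apply]
    rw [sub_eq_zero]
    -- LHS: σ(A*B) (D m) = 2⁻¹ • d(A*B) m
    have e1 : (σ (A * B) : H →L[ℂ] H) (D m)
        = (2⁻¹ : ℂ) • (d (A * B) : H →L[ℂ] H) m := by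
      rw [q' (A * B) m, hm1 m hm, map_smul]
      module
    -- RHS pieces
    have e2 : (σ B : H →L[ℂ] H) (D m) = (2⁻¹ : ℂ) • (d B : H →L[ℂ] H) m := by
      rw [q' B m, hm1 m hm, map_smul]
      module
    have e3 : (σ A : H →L[ℂ] H) (D ((σ B : H →L[ℂ] H) m))
        = (2⁻¹ : ℂ) • (d A : H →L[ℂ] H) ((σ B : H →L[ℂ] H) m) := by
      rw [q' A _, hmB m hm, map_smul]
      module
    calc (σ (A * B) : H →L[ℂ] H) (D m)
        = (2⁻¹ : ℂ) • (d (A * B) : H →L[ℂ] H) m := e1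
      _ = (2⁻¹ : ℂ) • ((d A : H →L[ℂ] H) ((σ B : H →L[ℂ] H) m)
            + (σ A : H →L[ℂ] H) ((d B : H →L[ℂ] H) m)) := by rw [q4 m]
      _ = (2 : ℂ) • (σ A : H →L[ℂ] H) ((σ B : H →L[ℂ] H) (D m)) := by
          have hx : (σ A : H →L[ℂ] H) ((σ B : H →L[ℂ] H) (D m))
              = (2⁻¹ : ℂ) • (d A : H →L[ℂ] H) ((σ B : H →L[ℂ] H) m) := by
            rw [← central (σ B) m]; exact e3
          have hy : (σ A : H →L[ℂ] H) ((σ B : H →L[ℂ] H) (D m))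
              = (2⁻¹ : ℂ) • (σ A : H →L[ℂ] H) ((d B : H →L[ℂ] H) m) := by
            rw [e2, map_smul]
          have hz : (2 : ℂ) • (σ A : H →L[ℂ] H) ((σ B : H →L[ℂ] H) (D m))
              = (2⁻¹ : ℂ) • (d A : H →L[ℂ] H) ((σ B : H →L[ℂ] H) m)
                + (2⁻¹ : ℂ) • (σ A : H →L[ℂ] H) ((d B : H →L[ℂ] H) m) := by
            rw [two_smul]
            nth_rewrite 1 [hx]
            rw [hy]
          rw [hz, smul_add]
  have := hsub hℓ
  simp only [LinearMap.mem_ker, ContinuousLinearMap.coe_coe, ContinuousLinearMap.sub_apply,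
    ContinuousLinearMap.coe_sub', Pi.sub_apply, ContinuousLinearMap.comp_apply,
    ContinuousLinearMap.smul_apply, ContinuousLinearMap.coe_smul', Pi.smul_apply] at this
  exact sub_eq_zero.mp this
end
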